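/- arXiv:2110.03443 — 2 statements merged into one kernel-verified Lean document; each statement's English description precedes it below -/
import Mathlib

section
/- (First-best solution through targeted explanation.) Let ū and w̄ be square-integrable random vectors in ℝⁿ (the bliss points of the agent and the principal, respectively), let Ω be a fixed real symmetric positive definite n×n matrix (the agent's weight matrix), and let 1 ≤ k ≤ n. If the rank of E[(ū − w̄)(ū − w̄)ᵀ] is at most k, then there exists a matrix E ∈ ℝ^{k×n} (the targeted explainer) such that, almost surely, the unique minimizer of f ↦ (f − ū)ᵀ Ω (f − ū) over the affine set {f ∈ ℝⁿ : E f = E w̄} is f = w̄. In particular, the explainer constraint E f = E w̄ induces the agent to choose the principal's bliss point in every state, achieving the first-best welfare, without any ex-ante restriction of the choice set. -/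
/-!
Write `d = ū - w̄` and `M = E[d dᵀ]`. For `v ∈ ker M` we get `E[(v ⬝ d)²] = vᵀ M v = 0`, so `d` is
almost surely orthogonal to the (finite-dimensional) kernel of `M`. Take for `E` any `k` rows
spanning the row space of `M Ω`, of dimension `rank (M Ω) ≤ rank M ≤ k`. If `E f = E w̄`, then
`c = f - w̄` satisfies `M Ω c = 0`, so `Ω c ⊥ d` almost surely, and the cross term in the expansion
of the loss at `f = w̄ + c` vanishes: the loss exceeds that at `w̄` by `cᵀ Ω c > 0`.
-/

open MeasureTheory Matrix

section Span
variable {K : Type*} {m n : Type*} [Fintype n]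

theorem Matrix.dotProduct_eq_zero_of_mem_span [CommSemiring K] {s : Set (n → K)} {c : n → K}
    (hs : ∀ v ∈ s, v ⬝ᵥ c = 0) {x : n → K} (hx : x ∈ Submodule.span K s) : x ⬝ᵥ c = 0 := by
  induction hx using Submodule.span_induction with
  | mem v hv => exact hs v hv
  | zero => exact zero_dotProduct c
  | add v w _ _ hv hw => rw [add_dotProduct, hv, hw, add_zero]
  | smul a v _ hv => rw [smul_dotProduct, hv, smul_zero]

theorem Matrix.exists_mulVec_eq_zero_imp_of_rank_le [Field K] [Finite m] (A : Matrix m n K) {k : ℕ}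
    (h : A.rank ≤ k) : ∃ E : Matrix (Fin k) n K, ∀ c, E *ᵥ c = 0 → A *ᵥ c = 0 := by
  obtain ⟨f, -, hspan, -⟩ := Submodule.exists_fun_fin_finrank_span_eq K (Set.range A.row)
  have hr : Module.finrank K (Submodule.span K (Set.range A.row)) ≤ k :=
    rank_eq_finrank_span_row A ▸ h
  refine ⟨fun i => if hi : (i : ℕ) < _ then f ⟨i, hi⟩ else 0, fun c hc => ?_⟩
  have hf : ∀ j, f j ⬝ᵥ c = 0 := fun j => by
    simpa [mulVec] using congrFun hc (Fin.castLE hr j)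
  funext i
  refine dotProduct_eq_zero_of_mem_span (s := Set.range f) (by simpa using hf) ?_
  rw [hspan]
  exact Submodule.subset_span ⟨i, rfl⟩

end Span

section SecondMoment
variable {α : Type*} [MeasurableSpace α] {μ : Measure α} {n : Type*} [Fintype n]

noncomputable def secondMoment (μ : Measure α) (d : α → n → ℝ) : Matrix n n ℝ :=
  Matrix.of fun i j => ∫ ω, d ω i * d ω j ∂μ

variable {d : α → n → ℝ}

theorem memLp_dotProduct (hd : ∀ i, MemLp (fun ω => d ω i) 2 μ) (v : n → ℝ) :
    MemLp (fun ω => v ⬝ᵥ d ω) 2 μ := by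
  simpa [dotProduct, Finset.sum_fn] using
    memLp_finsetSum' Finset.univ fun i _ => (hd i).const_mul (v i)

theorem dotProduct_secondMoment_mulVec (hd : ∀ i, MemLp (fun ω => d ω i) 2 μ) (v : n → ℝ) :
    v ⬝ᵥ (secondMoment μ d *ᵥ v) = ∫ ω, (v ⬝ᵥ d ω) ^ 2 ∂μ := by
  have hint : ∀ i j, Integrable (fun ω => v i * v j * (d ω i * d ω j)) μ := fun i j =>
    ((hd i).integrable_mul (hd j)).const_mul _
  calc v ⬝ᵥ (secondMoment μ d *ᵥ v) = ∑ i, ∑ j, ∫ ω, v i * v j * (d ω i * d ω j) ∂μ := by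
        simp only [dotProduct, mulVec, secondMoment, of_apply, Finset.mul_sum, integral_const_mul]
        exact Finset.sum_congr rfl fun i _ => Finset.sum_congr rfl fun j _ => by ring
    _ = ∫ ω, ∑ i, ∑ j, v i * v j * (d ω i * d ω j) ∂μ := by
        rw [integral_finsetSum _ fun i _ => integrable_finsetSum _ fun j _ => hint i j]
        simp only [integral_finsetSum _ fun j _ => hint _ j]
    _ = ∫ ω, (v ⬝ᵥ d ω) ^ 2 ∂μ := by
        congr 1 with ω
        simp only [sq, dotProduct, Finset.sum_mul_sum]
        exact Finset.sum_congr rfl fun i _ => Finset.sum_congr rfl fun j _ => by ring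

theorem ae_dotProduct_eq_zero_of_secondMoment_mulVec_eq_zero
    (hd : ∀ i, MemLp (fun ω => d ω i) 2 μ) {v : n → ℝ} (hv : secondMoment μ d *ᵥ v = 0) :
    ∀ᵐ ω ∂μ, v ⬝ᵥ d ω = 0 := by
  have hzero : ∫ ω, (v ⬝ᵥ d ω) ^ 2 ∂μ = 0 := by
    rw [← dotProduct_secondMoment_mulVec hd, hv, dotProduct_zero]
  filter_upwards [(integral_eq_zero_iff_of_nonneg (fun ω => sq_nonneg _)
    (memLp_dotProduct hd v).integrable_sq).mp hzero] with ω hω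
  exact pow_eq_zero_iff two_ne_zero |>.mp hω

theorem ae_forall_dotProduct_eq_zero_of_secondMoment_mulVec_eq_zero
    (hd : ∀ i, MemLp (fun ω => d ω i) 2 μ) :
    ∀ᵐ ω ∂μ, ∀ v, secondMoment μ d *ᵥ v = 0 → v ⬝ᵥ d ω = 0 := by
  obtain ⟨f, hf, hspan, -⟩ := Submodule.exists_fun_fin_finrank_span_eq ℝ
    (LinearMap.ker (secondMoment μ d).mulVecLin : Set (n → ℝ))
  filter_upwards [ae_all_iff.mpr fun i =>
    ae_dotProduct_eq_zero_of_secondMoment_mulVec_eq_zero hd (hf i)] with ω hω v hv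
  refine dotProduct_eq_zero_of_mem_span (s := Set.range f) (by rintro _ ⟨i, rfl⟩; exact hω i) ?_
  rw [hspan, Submodule.span_eq]
  exact hv

end SecondMoment

theorem Matrix.PosDef.dotProduct_mulVec_sub_lt {n : Type*} [Fintype n] {Ω : Matrix n n ℝ}
    (hΩ : Ω.PosDef) {u w f : n → ℝ} (hf : f ≠ w) (horth : (Ω *ᵥ (f - w)) ⬝ᵥ (u - w) = 0) :
    (w - u) ⬝ᵥ (Ω *ᵥ (w - u)) < (f - u) ⬝ᵥ (Ω *ᵥ (f - u)) := by
  set c := f - w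
  have hpos : 0 < c ⬝ᵥ (Ω *ᵥ c) := by
    simpa only [star_trivial] using hΩ.dotProduct_mulVec_pos (sub_ne_zero.mpr hf)
  have hcross : (Ω *ᵥ c) ⬝ᵥ (w - u) = 0 := by
    rw [← neg_sub u w, dotProduct_neg, horth, neg_zero]
  have hsymm : c ⬝ᵥ (Ω *ᵥ (w - u)) = (Ω *ᵥ c) ⬝ᵥ (w - u) := by
    rw [dotProduct_mulVec, ← mulVec_transpose, (isHermitian_iff_isSymm.mp hΩ.1).eq,
      dotProduct_comm]
  have hsplit : f - u = c + (w - u) := by simp [c]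
  rw [hsplit, mulVec_add, add_dotProduct, dotProduct_add, dotProduct_add, hsymm,
    dotProduct_comm (w - u) (Ω *ᵥ c), hcross]
  linarith

theorem firstBest_through_targeted_explainer_general
    {α : Type*} [MeasurableSpace α] (μ : Measure α)
    (n k : ℕ)
    (ubar wbar : α → Fin n → ℝ)
    (hu : ∀ i, MemLp (fun ω => ubar ω i) 2 μ)
    (hw : ∀ i, MemLp (fun ω => wbar ω i) 2 μ)
    (Ω : Matrix (Fin n) (Fin n) ℝ) (hΩ : Ω.PosDef)
    (hrank : (Matrix.of fun i j =>
        ∫ ω, (ubar ω i - wbar ω i) * (ubar ω j - wbar ω j) ∂μ :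
        Matrix (Fin n) (Fin n) ℝ).rank ≤ k) :
    ∃ E : Matrix (Fin k) (Fin n) ℝ, ∀ᵐ ω ∂μ,
      ∀ f : Fin n → ℝ, E *ᵥ f = E *ᵥ wbar ω → f ≠ wbar ω →
        (wbar ω - ubar ω) ⬝ᵥ (Ω *ᵥ (wbar ω - ubar ω))
          < (f - ubar ω) ⬝ᵥ (Ω *ᵥ (f - ubar ω)) := by
  -- `hrank` is a statement about `secondMoment μ (ubar - wbar)`, unfolded.
  have hd : ∀ i, MemLp (fun ω => (ubar - wbar) ω i) 2 μ := fun i => (hu i).sub (hw i)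
  obtain ⟨E, hE⟩ := (secondMoment μ (ubar - wbar) * Ω).exists_mulVec_eq_zero_imp_of_rank_le
    ((rank_mul_le_left _ _).trans hrank)
  refine ⟨E, ?_⟩
  filter_upwards [ae_forall_dotProduct_eq_zero_of_secondMoment_mulVec_eq_zero hd]
    with ω hω f hf hne
  refine hΩ.dotProduct_mulVec_sub_lt hne (hω _ ?_)
  rw [mulVec_mulVec, hE _ (by rw [mulVec_sub, hf, sub_self])]

/-- First-best solution through targeted explanation: if the rank of the
misalignment second-moment matrix `E[(ū − w̄)(ū − w̄)ᵀ]` is at most `k`, there is a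
`k`-dimensional linear explainer `E` such that almost surely the unique minimizer of the
agent's quadratic loss `(f − ū)ᵀ Ω (f − ū)` over `{f : E f = E w̄}` is `f = w̄`. -/
theorem firstBest_through_targeted_explainer
    {α : Type*} [MeasurableSpace α] (μ : Measure α) [IsProbabilityMeasure μ]
    (n k : ℕ) (hk1 : 1 ≤ k) (hkn : k ≤ n)
    (ubar wbar : α → Fin n → ℝ)
    (hu : ∀ i, MemLp (fun ω => ubar ω i) 2 μ)
    (hw : ∀ i, MemLp (fun ω => wbar ω i) 2 μ)
    (Ω : Matrix (Fin n) (Fin n) ℝ) (hΩ : Ω.PosDef)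
    (hrank : (Matrix.of fun i j =>
        ∫ ω, (ubar ω i - wbar ω i) * (ubar ω j - wbar ω j) ∂μ :
        Matrix (Fin n) (Fin n) ℝ).rank ≤ k) :
    ∃ E : Matrix (Fin k) (Fin n) ℝ, ∀ᵐ ω ∂μ,
      ∀ f : Fin n → ℝ, E *ᵥ f = E *ᵥ wbar ω → f ≠ wbar ω →
        (wbar ω - ubar ω) ⬝ᵥ (Ω *ᵥ (wbar ω - ubar ω))
          < (f - ubar ω) ⬝ᵥ (Ω *ᵥ (f - ubar ω)) :=
  firstBest_through_targeted_explainer_general μ n k ubar wbar hu hw Ω hΩ hrank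
end

section
/- (No restriction without substantial misalignment.) Let ū and w̄ be square-integrable random vectors in ℝⁿ such that the matrix Var(w̄) − E[(ū − w̄)(ū − w̄)ᵀ] is positive definite, where Var(w̄) = E[(w̄ − E[w̄])(w̄ − E[w̄])ᵀ]. Then for every matrix M ∈ ℝ^{r×n} of full row rank with r ≥ 1, E[‖M(ū − w̄)‖²] < E[‖M(w̄ − E[w̄])‖²]. Interpreted in the regulation model: the expected welfare loss from letting the agent choose his bliss point ū on the unexplained components (left-hand side) is strictly smaller than the expected welfare loss from fixing those components ex ante at their best constant value E[w̄] (right-hand side), so restricting the agent to fully explainable prediction functions is dominated by imposing no ex-ante restriction. -/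
/-! For a square-integrable random vector `x` and a matrix `M` with rows `mᵢ`,
`E‖M x‖² = ∑ᵢ mᵢᵀ E[x xᵀ] mᵢ`. Hence the restriction loss minus the misalignment loss is
`∑ᵢ mᵢᵀ D mᵢ`, where `D` is the positive definite matrix of the hypothesis; since `M` has
rank `r ≥ 1`, some row is nonzero, and the sum is positive. -/

open MeasureTheory Matrix

section SecondMoment

variable {α ι : Type*} [MeasurableSpace α] [Fintype ι]

noncomputable def secondMomentMatrix (μ : Measure α) (x : α → ι → ℝ) : Matrix ι ι ℝ :=
  Matrix.of fun i j => ∫ ω, x ω i * x ω j ∂μ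

variable {μ : Measure α} {x : α → ι → ℝ}

lemma integral_dotProduct_sq (hx : ∀ i, MemLp (fun ω => x ω i) 2 μ) (a : ι → ℝ) :
    ∫ ω, (a ⬝ᵥ x ω) ^ 2 ∂μ = a ⬝ᵥ secondMomentMatrix μ x *ᵥ a := by
  have hint : ∀ j k, Integrable (fun ω => a j * a k * (x ω j * x ω k)) μ := fun j k =>
    ((hx j).integrable_mul (hx k)).const_mul _
  have hexpand : ∀ ω, (a ⬝ᵥ x ω) ^ 2 = ∑ j, ∑ k, a j * a k * (x ω j * x ω k) := fun ω => by
    simp only [dotProduct, sq, Finset.sum_mul_sum]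
    exact Finset.sum_congr rfl fun j _ => Finset.sum_congr rfl fun k _ => by ring
  simp_rw [hexpand]
  rw [integral_finsetSum _ fun j _ => integrable_finsetSum _ fun k _ => hint j k]
  simp only [dotProduct, mulVec, secondMomentMatrix, of_apply, Finset.mul_sum]
  refine Finset.sum_congr rfl fun j _ => ?_
  rw [integral_finsetSum _ fun k _ => hint j k]
  exact Finset.sum_congr rfl fun k _ => by rw [integral_const_mul]; ring

lemma integral_sum_sq_mulVec {κ : Type*} [Fintype κ] (hx : ∀ i, MemLp (fun ω => x ω i) 2 μ)
    (M : Matrix κ ι ℝ) :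
    ∫ ω, ∑ i, ((M *ᵥ x ω) i) ^ 2 ∂μ = ∑ i, M i ⬝ᵥ secondMomentMatrix μ x *ᵥ M i := by
  have hmem : ∀ i, MemLp (fun ω => M i ⬝ᵥ x ω) 2 μ := fun i => by
    simp only [dotProduct]
    exact memLp_finsetSum _ fun j _ => (hx j).const_mul _
  change ∫ ω, ∑ i, (M i ⬝ᵥ x ω) ^ 2 ∂μ = _
  rw [integral_finsetSum _ fun i _ => (hmem i).integrable_sq]
  exact Finset.sum_congr rfl fun i _ => integral_dotProduct_sq hx (M i)

end SecondMoment

lemma Matrix.PosDef.sum_dotProduct_mulVec_rows_pos {κ ι : Type*} [Fintype κ] [Fintype ι]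
    {D : Matrix ι ι ℝ} (hD : D.PosDef) {M : Matrix κ ι ℝ} (hM : M ≠ 0) :
    0 < ∑ i, M i ⬝ᵥ D *ᵥ M i := by
  obtain ⟨i₀, hi₀⟩ : ∃ i, M i ≠ 0 := by
    by_contra! h
    exact hM (funext h)
  exact Finset.sum_pos' (fun i _ => hD.posSemidef.dotProduct_mulVec_nonneg (M i))
    ⟨i₀, Finset.mem_univ _, hD.dotProduct_mulVec_pos hi₀⟩

/-- No restriction without substantial misalignment: if
`Var(w̄) − E[(ū − w̄)(ū − w̄)ᵀ]` is positive definite, then for every matrix `M` of full row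
rank `r ≥ 1`, `E[‖M(ū − w̄)‖²] < E[‖M(w̄ − E[w̄])‖²]`. -/
theorem misalignment_loss_lt_restriction_loss
    {α : Type*} [MeasurableSpace α] (μ : Measure α) [IsProbabilityMeasure μ]
    (n : ℕ) (ubar wbar : α → Fin n → ℝ)
    (hu : ∀ i, MemLp (fun ω => ubar ω i) 2 μ)
    (hw : ∀ i, MemLp (fun ω => wbar ω i) 2 μ)
    (hpd : ((Matrix.of fun i j =>
          ∫ ω, (wbar ω i - ∫ ω', wbar ω' i ∂μ) * (wbar ω j - ∫ ω', wbar ω' j ∂μ) ∂μ)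
        - (Matrix.of fun i j =>
          ∫ ω, (ubar ω i - wbar ω i) * (ubar ω j - wbar ω j) ∂μ) :
        Matrix (Fin n) (Fin n) ℝ).PosDef)
    (r : ℕ) (hr : 1 ≤ r)
    (M : Matrix (Fin r) (Fin n) ℝ) (hM : M.rank = r) :
    ∫ ω, ∑ i, ((M *ᵥ (ubar ω - wbar ω)) i) ^ 2 ∂μ
      < ∫ ω, ∑ i, ((M *ᵥ (wbar ω - fun j => ∫ ω', wbar ω' j ∂μ)) i) ^ 2 ∂μ := by
  set mean : Fin n → ℝ := fun j => ∫ ω', wbar ω' j ∂μ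
  have hdiff : ∀ i, MemLp (fun ω => (ubar ω - wbar ω) i) 2 μ := fun i => (hu i).sub (hw i)
  have hcentered : ∀ i, MemLp (fun ω => (wbar ω - mean) i) 2 μ :=
    fun i => (hw i).sub (memLp_const _)
  have hD : (secondMomentMatrix μ (fun ω => wbar ω - mean)
      - secondMomentMatrix μ (fun ω => ubar ω - wbar ω)).PosDef := hpd
  have hM0 : M ≠ 0 := by
    rintro rfl
    rw [rank_zero] at hM
    omega
  rw [integral_sum_sq_mulVec hdiff, integral_sum_sq_mulVec hcentered, ← sub_pos,
    ← Finset.sum_sub_distrib]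
  simpa only [sub_mulVec, dotProduct_sub] using hD.sum_dotProduct_mulVec_rows_pos hM0
end
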